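/- arXiv:1703.03265 — 2 statements merged into one kernel-verified Lean document; each statement's English description precedes it below -/
import Mathlib

section
/- Let ρ be a d×d density matrix and let b_{ii} = (√ρ)_{ii} denote the diagonal entries of its positive semidefinite square root. Then for every λ ≥ 0 and every d×d diagonal density matrix δ, one has ‖√ρ − √(λδ)‖_HS² = 1 + λ − 2 Σ_i b_{ii} √(λ x_i) ≥ 1 − Σ_i b_{ii}², where x_i are the diagonal entries of δ; moreover equality is attained by choosing λ = Σ_i b_{ii}² and x_i = b_{ii}²/Σ_j b_{jj}² (when Σ_j b_{jj}² > 0). In particular inf_{λ ≥ 0, δ diagonal density matrix} ‖√ρ − √(λδ)‖_HS² = 1 − Σ_i b_{ii}². -/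
/-!
Since `λδ` is diagonal, `√(λδ) = diag(vᵢ)` with `vᵢ = √(λ xᵢ)` and `∑ vᵢ² = λ`, so expanding the
Hilbert–Schmidt norm gives `tr ρ + λ − 2 ∑ bᵢ vᵢ`. This exceeds `1 − ∑ bᵢ²` by `∑ (bᵢ − vᵢ)² ≥ 0`,
with equality at `v = b`, i.e. at `λ = ∑ bᵢ²`, `xᵢ = bᵢ² / λ`. That choice is always available:
`∑ bᵢ² = 0` would force the positive semidefinite `√ρ` to have zero trace, hence `√ρ = 0 = ρ`.
-/

open Matrix
open scoped ComplexOrder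

/-- The positive semidefinite square root of a positive semidefinite matrix
(the definition removed from Mathlib, restored with its old meaning). -/
noncomputable def Matrix.PosSemidef.sqrt {n : Type*} [Fintype n] [DecidableEq n] {𝕜 : Type*}
    [RCLike 𝕜] {A : Matrix n n 𝕜} (hA : A.PosSemidef) : Matrix n n 𝕜 :=
  hA.1.eigenvectorUnitary.1 * diagonal ((↑) ∘ (√·) ∘ hA.1.eigenvalues) *
  (star hA.1.eigenvectorUnitary : Matrix n n 𝕜)

/-- The trace norm of a matrix `A`: `‖A‖_tr = Tr √(AᴴA)`. -/
noncomputable def traceNorm {d : ℕ} (A : Matrix (Fin d) (Fin d) ℂ) : ℝ :=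
  ((Matrix.posSemidef_conjTranspose_mul_self A).sqrt.trace).re

/-- The Hilbert–Schmidt norm of a matrix `A`: `‖A‖_HS = √(Tr(AᴴA))`. -/
noncomputable def hsNorm {d : ℕ} (A : Matrix (Fin d) (Fin d) ℂ) : ℝ :=
  Real.sqrt (((Aᴴ * A).trace).re)

namespace Matrix.PosSemidef

variable {n 𝕜 : Type*} [Fintype n] [RCLike 𝕜] {A : Matrix n n 𝕜}

lemma sum_sq_re_diag_pos (hA : A.PosSemidef) (hA0 : A ≠ 0) :
    0 < ∑ i, RCLike.re (A i i) ^ 2 := by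
  by_contra! h
  have hre : ∀ i, RCLike.re (A i i) = 0 := fun i =>
    pow_eq_zero_iff two_ne_zero |>.mp <| (Finset.sum_eq_zero_iff_of_nonneg fun i _ =>
      sq_nonneg _).mp (h.antisymm (by positivity)) i (Finset.mem_univ i)
  refine hA0 (hA.trace_eq_zero_iff.mp ?_)
  exact Finset.sum_eq_zero fun i _ => by
    rw [diag, ← hA.1.coe_re_apply_self i, hre, RCLike.ofReal_zero]

variable [DecidableEq n]

open scoped MatrixOrder in
lemma sqrt_eq_cfcSqrt (hA : A.PosSemidef) : hA.sqrt = CFC.sqrt A := by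
  rw [CFC.sqrt_eq_real_sqrt A hA.nonneg, cfcₙ_eq_cfc, hA.1.cfc_eq, IsHermitian.cfc,
    Unitary.conjStarAlgAut_apply]
  rfl

open scoped MatrixOrder in
lemma posSemidef_sqrt (hA : A.PosSemidef) : hA.sqrt.PosSemidef := by
  rw [hA.sqrt_eq_cfcSqrt]
  exact (CFC.sqrt_nonneg A).posSemidef

open scoped MatrixOrder in
lemma sqrt_mul_sqrt (hA : A.PosSemidef) : hA.sqrt * hA.sqrt = A := by
  rw [hA.sqrt_eq_cfcSqrt]
  exact CFC.sqrt_mul_sqrt_self A hA.nonneg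

open scoped MatrixOrder in
lemma sqrt_eq_of_mul_self_eq (hA : A.PosSemidef) {B : Matrix n n 𝕜} (hB : B.PosSemidef)
    (h : B * B = A) : hA.sqrt = B := by
  rw [hA.sqrt_eq_cfcSqrt]
  exact CFC.sqrt_unique h hB.nonneg

lemma sqrt_of_isDiag (hA : A.PosSemidef) (hdiag : A.IsDiag) :
    hA.sqrt = diagonal fun i => ((√(RCLike.re (A i i)) : ℝ) : 𝕜) := by
  refine hA.sqrt_eq_of_mul_self_eq (posSemidef_diagonal_iff.mpr fun i => ?_) ?_
  · exact RCLike.ofReal_nonneg.mpr (Real.sqrt_nonneg _)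
  · conv_rhs => rw [← hdiag.diagonal_diag]
    rw [diagonal_mul_diagonal]
    congr 1
    ext i
    rw [← RCLike.ofReal_mul, Real.mul_self_sqrt (RCLike.nonneg_iff.mp hA.diag_nonneg).1]
    exact hA.1.coe_re_apply_self i

end Matrix.PosSemidef

lemma Finset.two_mul_sum_mul_le_sum_sq_add_sum_sq {ι : Type*} (s : Finset ι) (f g : ι → ℝ) :
    2 * ∑ i ∈ s, f i * g i ≤ ∑ i ∈ s, f i ^ 2 + ∑ i ∈ s, g i ^ 2 := by
  rw [mul_sum, ← sum_add_distrib]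
  exact sum_le_sum fun i _ => by rw [← mul_assoc]; exact two_mul_le_add_sq _ _

variable {d : ℕ}

lemma hsNorm_sq (X : Matrix (Fin d) (Fin d) ℂ) : hsNorm X ^ 2 = (Xᴴ * X).trace.re :=
  Real.sq_sqrt (Complex.nonneg_iff.mp (posSemidef_conjTranspose_mul_self X).trace_nonneg).1

lemma hsNorm_sub_diagonal_sq {A : Matrix (Fin d) (Fin d) ℂ} (hA : A.IsHermitian)
    (v : Fin d → ℝ) :
    hsNorm (A - diagonal fun i => (v i : ℂ)) ^ 2
      = (A * A).trace.re + ∑ i, v i ^ 2 - 2 * ∑ i, (A i i).re * v i := by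
  have hD : (diagonal fun i => (v i : ℂ))ᴴ = diagonal fun i => (v i : ℂ) := by
    simp [diagonal_conjTranspose]
  rw [hsNorm_sq, conjTranspose_sub, hA.eq, hD, sub_mul, mul_sub, mul_sub, trace_sub, trace_sub,
    trace_sub, trace_mul_comm (diagonal _) A]
  simp only [trace, diag_apply, mul_diagonal, diagonal_mul_diagonal, diagonal_apply_eq,
    Complex.sub_re, Complex.re_sum, Complex.mul_re, Complex.ofReal_re, Complex.ofReal_im, mul_zero,
    sub_zero, sq]
  ring

lemma sum_sqrt_mul_re_diag_sq {l : ℝ} {δ : Matrix (Fin d) (Fin d) ℂ} (hδtr : δ.trace = 1)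
    (hlδ : (l • δ).PosSemidef) : ∑ i, √(l * (δ i i).re) ^ 2 = l := by
  have hsum : ∑ i, (δ i i).re = 1 := by
    simpa [trace, Complex.re_sum] using congrArg Complex.re hδtr
  calc ∑ i, √(l * (δ i i).re) ^ 2 = ∑ i, l * (δ i i).re :=
        Finset.sum_congr rfl fun i _ => Real.sq_sqrt <| by
          simpa using (Complex.nonneg_iff.mp (hlδ.diag_nonneg (i := i))).1
    _ = l := by rw [← Finset.mul_sum, hsum, mul_one]

lemma hsNorm_sqrt_sub_sqrt_smul_sq {ρ δ : Matrix (Fin d) (Fin d) ℂ} (hρ : ρ.PosSemidef)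
    {l : ℝ} (hδtr : δ.trace = 1) (hdiag : δ.IsDiag) (hlδ : (l • δ).PosSemidef) :
    hsNorm (hρ.sqrt - hlδ.sqrt) ^ 2
      = ρ.trace.re + l - 2 * ∑ i, (hρ.sqrt i i).re * √(l * (δ i i).re) := by
  have hsqrt : hlδ.sqrt = diagonal fun i => ((√(l * (δ i i).re) : ℝ) : ℂ) := by
    rw [hlδ.sqrt_of_isDiag (hdiag.smul l)]
    simp
  rw [hsqrt, hsNorm_sub_diagonal_sq hρ.posSemidef_sqrt.1, hρ.sqrt_mul_sqrt,
    sum_sqrt_mul_re_diag_sq hδtr hlδ]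

lemma neg_sum_sq_le_sub_two_mul_sum_mul_sqrt (b : Fin d → ℝ) {l : ℝ}
    {δ : Matrix (Fin d) (Fin d) ℂ} (hδtr : δ.trace = 1) (hlδ : (l • δ).PosSemidef) :
    -∑ i, b i ^ 2 ≤ l - 2 * ∑ i, b i * √(l * (δ i i).re) := by
  have := Finset.univ.two_mul_sum_mul_le_sum_sq_add_sum_sq b fun i => √(l * (δ i i).re)
  rw [sum_sqrt_mul_re_diag_sq hδtr hlδ] at this
  linarith

lemma trace_diagonal_sq_div_sum_sq {n : Type*} [Fintype n] [DecidableEq n] {b : n → ℝ}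
    (hB : ∑ i, b i ^ 2 ≠ 0) : (diagonal fun i => ((b i ^ 2 / ∑ j, b j ^ 2 : ℝ) : ℂ)).trace = 1 := by
  rw [trace_diagonal, ← Complex.ofReal_sum, ← Finset.sum_div, div_self hB, Complex.ofReal_one]

/-- For a density matrix `ρ` with `b i = (√ρ)_{ii}`: for every `λ ≥ 0` and diagonal
density matrix `δ` (with diagonal entries `x_i`),
`‖√ρ − √(λδ)‖_HS² = 1 + λ − 2 Σ_i b_i √(λ x_i) ≥ 1 − Σ_i b_i²`; equality is attained at
`λ = Σ_i b_i²`, `x_i = b_i²/Σ_j b_j²` (when `Σ_j b_j² > 0`); and so the infimum over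
all `λ ≥ 0` and diagonal density matrices `δ` of `‖√ρ − √(λδ)‖_HS²` equals `1 − Σ_i b_i²`. -/
theorem hsNorm_sqrt_sub_sqrt_smul_diag {d : ℕ}
    (ρ : Matrix (Fin d) (Fin d) ℂ) (hρ : ρ.PosSemidef) (hρtr : ρ.trace = 1)
    (b : Fin d → ℝ) (hb : ∀ i, b i = (hρ.sqrt i i).re) :
    (∀ (l : ℝ), 0 ≤ l → ∀ (δ : Matrix (Fin d) (Fin d) ℂ), δ.PosSemidef →
      δ.trace = 1 → δ.IsDiag → ∀ (hlδ : (l • δ).PosSemidef),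
      hsNorm (hρ.sqrt - hlδ.sqrt) ^ 2
          = 1 + l - 2 * ∑ i, b i * Real.sqrt (l * ((δ i i).re)) ∧
      1 + l - 2 * ∑ i, b i * Real.sqrt (l * ((δ i i).re)) ≥ 1 - ∑ i, (b i) ^ 2) ∧
    (0 < ∑ i, (b i) ^ 2 →
      ∀ (h : (((∑ i, (b i) ^ 2 : ℝ)) •
          (Matrix.diagonal fun i => (((b i) ^ 2 / ∑ j, (b j) ^ 2 : ℝ) : ℂ))).PosSemidef),
        hsNorm (hρ.sqrt - h.sqrt) ^ 2 = 1 - ∑ i, (b i) ^ 2) ∧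
    sInf {x : ℝ | ∃ (l : ℝ) (δ : Matrix (Fin d) (Fin d) ℂ) (_ : δ.PosSemidef)
          (hlδ : (l • δ).PosSemidef),
        0 ≤ l ∧ δ.trace = 1 ∧ δ.IsDiag ∧ x = hsNorm (hρ.sqrt - hlδ.sqrt) ^ 2}
      = 1 - ∑ i, (b i) ^ 2 := by
  set B := ∑ i, b i ^ 2
  have hvalue {l : ℝ} {δ : Matrix (Fin d) (Fin d) ℂ} (hδtr : δ.trace = 1) (hdiag : δ.IsDiag)
      (hlδ : (l • δ).PosSemidef) :
      hsNorm (hρ.sqrt - hlδ.sqrt) ^ 2 = 1 + l - 2 * ∑ i, b i * √(l * (δ i i).re) := by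
    simp only [hsNorm_sqrt_sub_sqrt_smul_sq hρ hδtr hdiag hlδ, hρtr, Complex.one_re, hb]
  have hbound {l : ℝ} {δ : Matrix (Fin d) (Fin d) ℂ} (hδtr : δ.trace = 1)
      (hlδ : (l • δ).PosSemidef) : 1 + l - 2 * ∑ i, b i * √(l * (δ i i).re) ≥ 1 - B := by
    linarith [neg_sum_sq_le_sub_two_mul_sum_mul_sqrt b hδtr hlδ]
  have hB : 0 < B := by
    have hsqrt0 : hρ.sqrt ≠ 0 := fun h0 => by simp [← hρ.sqrt_mul_sqrt, h0] at hρtr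
    simpa [B, hb] using hρ.posSemidef_sqrt.sum_sq_re_diag_pos hsqrt0
  set δ₀ := diagonal fun i => ((b i ^ 2 / B : ℝ) : ℂ)
  have hδ₀ : δ₀.PosSemidef := posSemidef_diagonal_iff.mpr fun i => by positivity
  have hδ₀tr : δ₀.trace = 1 := trace_diagonal_sq_div_sum_sq hB.ne'
  have hmin (_ : 0 < B) (h : (B • δ₀).PosSemidef) : hsNorm (hρ.sqrt - h.sqrt) ^ 2 = 1 - B := by
    have hb_nonneg i : 0 ≤ b i := hb i ▸ (Complex.nonneg_iff.mp hρ.posSemidef_sqrt.diag_nonneg).1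
    have hterm i : b i * √(B * (δ₀ i i).re) = b i ^ 2 := by
      simp only [δ₀, diagonal_apply_eq, Complex.ofReal_re]
      rw [mul_div_cancel₀ _ hB.ne', Real.sqrt_sq (hb_nonneg i), sq]
    rw [hvalue hδ₀tr (isDiag_diagonal _) h, Finset.sum_congr rfl fun i _ => hterm i]
    ring
  refine ⟨fun l _ δ _ hδtr hdiag hlδ => ⟨hvalue hδtr hdiag hlδ, hbound hδtr hlδ⟩, hmin,
    IsLeast.csInf_eq ⟨⟨B, δ₀, hδ₀, hδ₀.smul hB.le, hB.le, hδ₀tr, isDiag_diagonal _,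
      (hmin hB _).symm⟩, ?_⟩⟩
  rintro _ ⟨l, δ, -, hlδ, -, hδtr, hdiag, rfl⟩
  exact (hvalue hδtr hdiag hlδ).symm ▸ hbound hδtr hlδ
end

section
/- For any d×d positive semidefinite matrices P and Q, the Powers–Størmer inequality holds: ‖P − Q‖_tr ≥ ‖√P − √Q‖_HS², where √P and √Q are the positive semidefinite square roots of P and Q. -/
/-!
With `A = √P - √Q` and `B = √P + √Q` one has `AB + BA = 2 (P - Q)`. For `S = sign A` we get
`AS = SA = |A|`, hence `Tr ((P - Q) S) = Tr (|A| B)`. In an eigenbasis of `A` the matrices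
`B ± A = 2√P, 2√Q` are positive semidefinite, so the diagonal entries of `B` dominate the
moduli `|λᵢ|` of the eigenvalues of `A`, giving `Tr (|A| B) ≥ ∑ λᵢ² = ‖A‖²_HS`. On the other hand `-1 ≤ S ≤ 1`, so
`Tr ((P - Q) S) ≤ ∑ |μⱼ| = ‖P - Q‖_tr`, where `μⱼ` are the eigenvalues of `P - Q`.
-/

open Matrix
open scoped ComplexOrder

open Unitary

lemma abs_sign_le_one {α : Type*} [Ring α] [LinearOrder α] [IsStrictOrderedRing α] (x : α) :
    |(SignType.sign x : α)| ≤ 1 := by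
  rcases lt_trichotomy x 0 with h | rfl | h <;> simp [*]

namespace Matrix

variable {n 𝕜 : Type*} [RCLike 𝕜]

lemma abs_re_apply_le_of_posSemidef {X Y : Matrix n n 𝕜} (hsub : (X - Y).PosSemidef)
    (hadd : (X + Y).PosSemidef) (i : n) : |RCLike.re (Y i i)| ≤ RCLike.re (X i i) := by
  have hs := RCLike.nonneg_iff.mp (hsub.diag_nonneg (i := i))
  have ha := RCLike.nonneg_iff.mp (hadd.diag_nonneg (i := i))
  simp only [sub_apply, add_apply, map_sub, map_add] at hs ha
  exact abs_le.mpr ⟨by linarith [hs.1, ha.1], by linarith [hs.1, ha.1]⟩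

variable [Fintype n] [DecidableEq n]

section sqrt

open scoped MatrixOrder

variable {A B : Matrix n n 𝕜}

lemma PosSemidef.sqrt_eq_cfcSqrt_s18 (hA : A.PosSemidef) : hA.sqrt = CFC.sqrt A := by
  have : 0 ≤ A := hA.nonneg
  rw [CFC.sqrt_eq_cfc, cfc_nnreal_eq_real _ A, hA.1.cfc_eq, PosSemidef.sqrt, IsHermitian.cfc,
    conjStarAlgAut_apply]
  congr 3
  funext i
  simp [max_eq_left (hA.eigenvalues_nonneg i)]

lemma PosSemidef.posSemidef_sqrt_s18 (hA : A.PosSemidef) : hA.sqrt.PosSemidef := by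
  rw [hA.sqrt_eq_cfcSqrt_s18]
  exact (CFC.sqrt_nonneg A).posSemidef

lemma PosSemidef.sqrt_mul_self (hA : A.PosSemidef) : hA.sqrt * hA.sqrt = A := by
  have : 0 ≤ A := hA.nonneg
  rw [hA.sqrt_eq_cfcSqrt_s18]
  exact CFC.sqrt_mul_sqrt_self A

lemma PosSemidef.eq_sqrt_of_sq_eq (hA : A.PosSemidef) (hB : B.PosSemidef) (hAB : A ^ 2 = B) :
    A = hB.sqrt := by
  have : 0 ≤ A := hA.nonneg
  rw [hB.sqrt_eq_cfcSqrt_s18]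
  exact (CFC.sqrt_unique (by rw [← sq, hAB]) this).symm

end sqrt

lemma PosSemidef.conjStarAlgAut {A : Matrix n n 𝕜} (hA : A.PosSemidef) (u : unitaryGroup n 𝕜) :
    (conjStarAlgAut 𝕜 _ u A).PosSemidef := by
  simpa [conjStarAlgAut_apply, ← star_eq_conjTranspose] using
    hA.mul_mul_conjTranspose_same (u : Matrix n n 𝕜)

lemma trace_conjStarAlgAut (u : unitaryGroup n 𝕜) (A : Matrix n n 𝕜) :
    (conjStarAlgAut 𝕜 _ u A).trace = A.trace := by
  rw [conjStarAlgAut_apply, trace_mul_cycle, coe_star_mul_self, one_mul]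

namespace IsHermitian

variable {A : Matrix n n 𝕜} (hA : A.IsHermitian)

lemma cfc_id : hA.cfc id = A := hA.spectral_theorem.symm

lemma cfc_mul_cfc (f g : ℝ → ℝ) : hA.cfc f * hA.cfc g = hA.cfc (fun x ↦ f x * g x) := by
  simp only [IsHermitian.cfc, ← map_mul, diagonal_mul_diagonal]
  simp [Function.comp_def]

lemma mul_self_eq_cfc : A * A = hA.cfc (· ^ 2) := by
  have := hA.cfc_mul_cfc id id
  rw [hA.cfc_id] at this
  simpa [← sq] using this

lemma cfc_neg (f : ℝ → ℝ) : hA.cfc (fun x ↦ -f x) = -hA.cfc f := by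
  rw [IsHermitian.cfc, IsHermitian.cfc, ← map_neg, diagonal_neg]
  congr 2
  funext i
  simp

lemma conjStarAlgAut_star_cfc (f : ℝ → ℝ) :
    conjStarAlgAut 𝕜 _ (star hA.eigenvectorUnitary) (hA.cfc f) =
      diagonal (RCLike.ofReal ∘ f ∘ hA.eigenvalues) := by
  rw [IsHermitian.cfc, ← conjStarAlgAut_mul_apply, star_mul_self, map_one, StarAlgEquiv.one_apply]

lemma trace_cfc_mul (f : ℝ → ℝ) (B : Matrix n n 𝕜) :
    (hA.cfc f * B).trace = ∑ i, (f (hA.eigenvalues i) : 𝕜) *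
      conjStarAlgAut 𝕜 _ (star hA.eigenvectorUnitary) B i i := by
  rw [← trace_conjStarAlgAut (star hA.eigenvectorUnitary), map_mul, conjStarAlgAut_star_cfc]
  simp [trace, diagonal_mul]

lemma trace_cfc (f : ℝ → ℝ) : (hA.cfc f).trace = ∑ i, (f (hA.eigenvalues i) : 𝕜) := by
  simpa using hA.trace_cfc_mul f 1

lemma posSemidef_cfc {f : ℝ → ℝ} (hf : ∀ i, 0 ≤ f (hA.eigenvalues i)) :
    (hA.cfc f).PosSemidef :=
  (posSemidef_diagonal_iff.mpr fun i ↦ RCLike.ofReal_nonneg.mpr (hf i)).conjStarAlgAut _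

lemma posSemidef_one_sub_cfc {f : ℝ → ℝ} (hf : ∀ i, f (hA.eigenvalues i) ≤ 1) :
    (1 - hA.cfc f).PosSemidef := by
  have : 1 - hA.cfc f = hA.cfc (fun x ↦ 1 - f x) := by
    rw [IsHermitian.cfc, IsHermitian.cfc, ← map_one (conjStarAlgAut 𝕜 _ hA.eigenvectorUnitary),
      ← map_sub, ← diagonal_one, diagonal_sub]
    congr 2
    funext i
    simp
  rw [this]
  exact hA.posSemidef_cfc fun i ↦ sub_nonneg.mpr (hf i)

lemma posSemidef_one_sub_cfc_sign : (1 - hA.cfc (SignType.sign ·)).PosSemidef :=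
  hA.posSemidef_one_sub_cfc fun _ ↦ (le_abs_self _).trans (abs_sign_le_one _)

lemma posSemidef_one_add_cfc_sign : (1 + hA.cfc (SignType.sign ·)).PosSemidef := by
  rw [← sub_neg_eq_add, ← hA.cfc_neg]
  exact hA.posSemidef_one_sub_cfc fun _ ↦ (neg_le_abs _).trans (abs_sign_le_one _)

lemma re_trace_mul_le_sum_abs_eigenvalues {S : Matrix n n 𝕜} (hsub : (1 - S).PosSemidef)
    (hadd : (1 + S).PosSemidef) : RCLike.re (A * S).trace ≤ ∑ i, |hA.eigenvalues i| := by
  set c := conjStarAlgAut 𝕜 _ (star hA.eigenvectorUnitary)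
  have hdiag (i : n) : |RCLike.re (c S i i)| ≤ 1 := by
    have h₁ := hsub.conjStarAlgAut (star hA.eigenvectorUnitary)
    have h₂ := hadd.conjStarAlgAut (star hA.eigenvectorUnitary)
    rw [map_sub, map_one] at h₁
    rw [map_add, map_one] at h₂
    simpa [c] using abs_re_apply_le_of_posSemidef h₁ h₂ i
  have htrace := hA.trace_cfc_mul id S
  rw [hA.cfc_id] at htrace
  rw [htrace, map_sum]
  refine Finset.sum_le_sum fun i _ ↦ ?_
  rw [id, RCLike.re_ofReal_mul]
  calc hA.eigenvalues i * RCLike.re (c S i i)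
      ≤ |hA.eigenvalues i| * |RCLike.re (c S i i)| := (le_abs_self _).trans (abs_mul _ _).le
    _ ≤ |hA.eigenvalues i| := mul_le_of_le_one_right (abs_nonneg _) (hdiag i)

lemma sum_sq_eigenvalues_le_re_trace_cfc_abs_mul {B : Matrix n n 𝕜} (hsub : (B - A).PosSemidef)
    (hadd : (B + A).PosSemidef) :
    ∑ i, hA.eigenvalues i ^ 2 ≤ RCLike.re (hA.cfc (|·|) * B).trace := by
  set c := conjStarAlgAut 𝕜 _ (star hA.eigenvectorUnitary)
  have hcA : c A = diagonal (RCLike.ofReal ∘ hA.eigenvalues) :=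
    hA.conjStarAlgAut_star_eigenvectorUnitary
  have hdiag (i : n) : |hA.eigenvalues i| ≤ RCLike.re (c B i i) := by
    have h₁ := hsub.conjStarAlgAut (star hA.eigenvectorUnitary)
    have h₂ := hadd.conjStarAlgAut (star hA.eigenvectorUnitary)
    rw [map_sub, hcA] at h₁
    rw [map_add, hcA] at h₂
    simpa [c] using abs_re_apply_le_of_posSemidef h₁ h₂ i
  rw [hA.trace_cfc_mul, map_sum]
  refine Finset.sum_le_sum fun i _ ↦ ?_
  rw [RCLike.re_ofReal_mul, sq, ← abs_mul_abs_self]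
  exact mul_le_mul_of_nonneg_left (hdiag i) (abs_nonneg _)

lemma trace_anticomm_mul_cfc_sign (B : Matrix n n 𝕜) :
    ((A * B + B * A) * hA.cfc (SignType.sign ·)).trace = 2 * (hA.cfc (|·|) * B).trace := by
  have hleft := hA.cfc_mul_cfc (SignType.sign ·) id
  have hright := hA.cfc_mul_cfc id (SignType.sign ·)
  rw [hA.cfc_id] at hleft hright
  simp only [id, sign_mul_self, self_mul_sign] at hleft hright
  rw [add_mul, trace_add, trace_mul_cycle, hleft, mul_assoc, hright, trace_mul_comm B, two_mul]

end IsHermitian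

lemma PosSemidef.sum_sq_eigenvalues_le_re_trace_sub_mul_cfc_sign {P Q : Matrix n n 𝕜}
    (hP : P.PosSemidef) (hQ : Q.PosSemidef) (hA : (hP.sqrt - hQ.sqrt).IsHermitian) :
    ∑ i, hA.eigenvalues i ^ 2 ≤ RCLike.re ((P - Q) * hA.cfc (SignType.sign ·)).trace := by
  set A := hP.sqrt - hQ.sqrt
  set B := hP.sqrt + hQ.sqrt
  have hsub : (B - A).PosSemidef := by
    convert hQ.posSemidef_sqrt_s18.add hQ.posSemidef_sqrt_s18 using 1
    simp only [A, B]
    abel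
  have hadd : (B + A).PosSemidef := by
    convert hP.posSemidef_sqrt_s18.add hP.posSemidef_sqrt_s18 using 1
    simp only [A, B]
    abel
  have hanticomm : A * B + B * A = (P - Q) + (P - Q) := by
    calc A * B + B * A
        = (hP.sqrt * hP.sqrt - hQ.sqrt * hQ.sqrt) + (hP.sqrt * hP.sqrt - hQ.sqrt * hQ.sqrt) := by
          simp only [A, B]
          noncomm_ring
      _ = (P - Q) + (P - Q) := by rw [hP.sqrt_mul_self, hQ.sqrt_mul_self]
  have htrace : ((P - Q) * hA.cfc (SignType.sign ·)).trace = (hA.cfc (|·|) * B).trace := by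
    have := hA.trace_anticomm_mul_cfc_sign B
    rw [hanticomm, add_mul, trace_add, ← two_mul] at this
    exact mul_left_cancel₀ two_ne_zero this
  rw [htrace]
  exact hA.sum_sq_eigenvalues_le_re_trace_cfc_abs_mul hsub hadd

variable {d : ℕ} {A : Matrix (Fin d) (Fin d) ℂ}

lemma IsHermitian.traceNorm_eq_sum_abs_eigenvalues (hA : A.IsHermitian) :
    traceNorm A = ∑ i, |hA.eigenvalues i| := by
  have hsq : hA.cfc (|·|) ^ 2 = Aᴴ * A := by
    simp only [sq, hA.cfc_mul_cfc, abs_mul_abs_self, hA.eq, hA.mul_self_eq_cfc]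
  rw [traceNorm, ← (hA.posSemidef_cfc fun _ ↦ abs_nonneg _).eq_sqrt_of_sq_eq _ hsq, hA.trace_cfc,
    Complex.re_sum]
  simp

lemma IsHermitian.hsNorm_sq_eq_sum_sq_eigenvalues (hA : A.IsHermitian) :
    hsNorm A ^ 2 = ∑ i, hA.eigenvalues i ^ 2 := by
  rw [hsNorm, hA.eq, hA.mul_self_eq_cfc, hA.trace_cfc, Complex.re_sum]
  simp only [Complex.coe_algebraMap, Complex.ofReal_re]
  exact Real.sq_sqrt (by positivity)

end Matrix

/-- The Powers–Størmer inequality: for positive semidefinite matrices `P`, `Q`,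
`‖P − Q‖_tr ≥ ‖√P − √Q‖_HS²`. -/
theorem powers_stormer {d : ℕ} (P Q : Matrix (Fin d) (Fin d) ℂ)
    (hP : P.PosSemidef) (hQ : Q.PosSemidef) :
    traceNorm (P - Q) ≥ hsNorm (hP.sqrt - hQ.sqrt) ^ 2 := by
  have hA : (hP.sqrt - hQ.sqrt).IsHermitian := hP.posSemidef_sqrt_s18.1.sub hQ.posSemidef_sqrt_s18.1
  have hR : (P - Q).IsHermitian := hP.1.sub hQ.1
  rw [ge_iff_le, hA.hsNorm_sq_eq_sum_sq_eigenvalues, hR.traceNorm_eq_sum_abs_eigenvalues]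
  exact (hP.sum_sq_eigenvalues_le_re_trace_sub_mul_cfc_sign hQ hA).trans
    (hR.re_trace_mul_le_sum_abs_eigenvalues hA.posSemidef_one_sub_cfc_sign
      hA.posSemidef_one_add_cfc_sign)
end
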